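/- arXiv:2306.02849 — 2 statements merged into one kernel-verified Lean document; each statement's English description precedes it below -/
import Mathlib

section
/- Let Ω be a finite scenario set and for each ω ∈ Ω let π_ω ∈ ℝ^ℓ satisfy π_ω ≥ 0, π_ω ≤ 𝟙 (the all-ones vector), and S_ω⊤π_ω ≤ 0 (componentwise). Then for every x ∈ ℝ^{n₁}, y ∈ ℝ^{n₂}, and every (z_ω)_{ω∈Ω}, (ε_ω)_{ω∈Ω} with z_ω ∈ ℝ^m_{≥0}, ε_ω ∈ ℝ^ℓ_{≥0}, and W_ω x + T_ω y + S_ω z_ω + ε_ω ≥ h_ω for all ω ∈ Ω, one has Σ_{ω∈Ω} 𝟙⊤ε_ω ≥ Σ_{ω∈Ω} π_ω⊤(h_ω − W_ω x − T_ω y). In particular, if (x, y) admits feasible recourse in every scenario (i.e., for each ω there is z_ω ∈ ℝ^m_{≥0} with W_ω x + T_ω y + S_ω z_ω ≥ h_ω), then 0 ≥ Σ_{ω∈Ω} π_ω⊤(h_ω − W_ω x − T_ω y); this establishes the validity of the Benders feasibility cut 0 ≥ 𝟙⊤ε̆ + (x−x̆)⊤λ̆ + (y−y̆)⊤β̆ generated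 from dual multipliers of the feasibility problem. -/
open Matrix

lemma dot_mono_right {ℓ : ℕ} {π a b : Fin ℓ → ℝ} (hπ : 0 ≤ π) (hab : a ≤ b) :
    π ⬝ᵥ a ≤ π ⬝ᵥ b := by
  apply Finset.sum_le_sum
  intro i _
  exact mul_le_mul_of_nonneg_left (hab i) (hπ i)

lemma dot_nonpos {ℓ : ℕ} {a b : Fin ℓ → ℝ} (ha : a ≤ 0) (hb : 0 ≤ b) :
    a ⬝ᵥ b ≤ 0 := by
  apply Finset.sum_nonpos
  intro i _
  exact mul_nonpos_of_nonpos_of_nonneg (ha i) (hb i)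

lemma dot_mono_left {ℓ : ℕ} {a b c : Fin ℓ → ℝ} (hab : a ≤ b) (hc : 0 ≤ c) :
    a ⬝ᵥ c ≤ b ⬝ᵥ c := by
  apply Finset.sum_le_sum
  intro i _
  exact mul_le_mul_of_nonneg_right (hab i) (hc i)

/-- Validity of the Benders feasibility cut: if for each scenario `ω` the multipliers
`π_ω` satisfy `0 ≤ π_ω ≤ 𝟙` and `S_ω⊤π_ω ≤ 0`, then the total slack `Σ_ω 𝟙⊤ε_ω` of any
feasibility-problem solution dominates `Σ_ω π_ω⊤(h_ω − W_ω x − T_ω y)`; in particular, if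
`(x, y)` admits feasible recourse in every scenario, then
`0 ≥ Σ_ω π_ω⊤(h_ω − W_ω x − T_ω y)`. -/
theorem benders_feasibility_cut_valid
    {n₁ n₂ m ℓ : ℕ} {Ω : Type*} [Fintype Ω]
    (W : Ω → Matrix (Fin ℓ) (Fin n₁) ℝ) (T : Ω → Matrix (Fin ℓ) (Fin n₂) ℝ)
    (S : Ω → Matrix (Fin ℓ) (Fin m) ℝ) (h : Ω → Fin ℓ → ℝ)
    (π : Ω → Fin ℓ → ℝ)
    (hπ0 : ∀ ω, 0 ≤ π ω)
    (hπ1 : ∀ ω, π ω ≤ fun _ => (1 : ℝ))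
    (hdual : ∀ ω, (S ω)ᵀ *ᵥ π ω ≤ 0) :
    (∀ (x : Fin n₁ → ℝ) (y : Fin n₂ → ℝ) (z : Ω → Fin m → ℝ) (ε : Ω → Fin ℓ → ℝ),
        (∀ ω, 0 ≤ z ω) → (∀ ω, 0 ≤ ε ω) →
        (∀ ω, h ω ≤ W ω *ᵥ x + T ω *ᵥ y + S ω *ᵥ z ω + ε ω) →
        ∑ ω, π ω ⬝ᵥ (h ω - W ω *ᵥ x - T ω *ᵥ y) ≤ ∑ ω, (fun _ => (1 : ℝ)) ⬝ᵥ ε ω) ∧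
    (∀ (x : Fin n₁ → ℝ) (y : Fin n₂ → ℝ),
        (∀ ω : Ω, ∃ z : Fin m → ℝ, 0 ≤ z ∧ h ω ≤ W ω *ᵥ x + T ω *ᵥ y + S ω *ᵥ z) →
        ∑ ω, π ω ⬝ᵥ (h ω - W ω *ᵥ x - T ω *ᵥ y) ≤ 0) := by
  have key : ∀ (x : Fin n₁ → ℝ) (y : Fin n₂ → ℝ) (z : Ω → Fin m → ℝ) (ε : Ω → Fin ℓ → ℝ),
      (∀ ω, 0 ≤ z ω) → (∀ ω, 0 ≤ ε ω) →
      (∀ ω, h ω ≤ W ω *ᵥ x + T ω *ᵥ y + S ω *ᵥ z ω + ε ω) →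
      ∑ ω, π ω ⬝ᵥ (h ω - W ω *ᵥ x - T ω *ᵥ y) ≤ ∑ ω, (fun _ => (1 : ℝ)) ⬝ᵥ ε ω := by
    intro x y z ε hz hε hfeas
    apply Finset.sum_le_sum
    intro ω _
    have h1 : h ω - W ω *ᵥ x - T ω *ᵥ y ≤ S ω *ᵥ z ω + ε ω := by
      intro i
      have := hfeas ω i
      simp only [Pi.add_apply, Pi.sub_apply] at *
      linarith
    calc π ω ⬝ᵥ (h ω - W ω *ᵥ x - T ω *ᵥ y)
        ≤ π ω ⬝ᵥ (S ω *ᵥ z ω + ε ω) := dot_mono_right (hπ0 ω) h1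
      _ = π ω ⬝ᵥ (S ω *ᵥ z ω) + π ω ⬝ᵥ ε ω := dotProduct_add _ _ _
      _ ≤ 0 + (fun _ => (1 : ℝ)) ⬝ᵥ ε ω := by
          apply add_le_add
          · have : π ω ⬝ᵥ (S ω *ᵥ z ω) = ((S ω)ᵀ *ᵥ π ω) ⬝ᵥ z ω := by
              rw [dotProduct_mulVec, mulVec_transpose]
            rw [this]
            exact dot_nonpos (hdual ω) (hz ω)
          · exact dot_mono_left (hπ1 ω) (hε ω)
      _ = (fun _ => (1 : ℝ)) ⬝ᵥ ε ω := zero_add _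
  refine ⟨key, ?_⟩
  intro x y hrec
  choose z hz0 hzf using hrec
  have := key x y z (fun _ => 0) hz0 (fun _ => le_refl _)
    (fun ω => by simpa using hzf ω)
  simpa using this
end

section
/- The TWATSP-ST has relatively complete recourse: let x : A → {0,1} be such that the arcs with x_{ij} = 1 form a directed Hamiltonian cycle on V through the depot 0 (equivalently, x satisfies the degree and subtour-elimination constraints), let y^s, y^e : V⁺ → ℝ_{≥0} be any time window assignment, let t : A → ℝ_{≥0} be any realized travel times, and suppose M ≥ Σ_{(i,j)∈A} t_{ij} + 2 Σ_{j∈V⁺} s_j. Then there exist w : V → ℝ with w_0 = t_0 and w_j ≥ 0 for j ∈ V⁺, e, l : V⁺ → ℝ_{≥0}, and o ∈ ℝ_{≥0} satisfying all second-stage constraints: w_j ≥ w_i + t_{ij} + s_j − (1 − x_{ij})M for all (i,j) ∈ A with j ∈ V⁺; e_j ≥ y^s_j − w_j − s_j and l_j ≥ w_j − y^e_j for all j ∈ V⁺; and o ≥ w_j + t_{j0} − T for all j ∈ V⁺. Hence the second-stage problem is feasible for every feasible first-stage decision and every travel-time scenario. -/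
/-!
Schedule the vehicle along the tour without waiting: `w j` is `t₀` plus the travel and
service times accumulated along the tour up to `j`, so every tour arc holds with equality.
For an arc off the tour (`x i j = 0`) the constraint asks `w i - w j + t i j + s j ≤ M`;
here `w j ≥ t₀`, and `w i - t₀` is at most the cost of all tour legs but the return to the
depot. Those legs are distinct arcs different from `(i, j)` and visit each customer once,
whence the bound `Σ_A t + 2 Σ_{V⁺} s`. Earliness, lateness and overtime are positive parts.
-/

open Finset

section SumInjOn

variable {ι κ M : Type*} [DecidableEq κ]
  [AddCommMonoid M] [PartialOrder M] [IsOrderedAddMonoid M]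
  {s : Finset ι} {u : Finset κ} {g : ι → κ} {c : κ → M}

theorem Finset.sum_comp_le_sum_of_injOn (hg : Set.InjOn g s) (hgu : ∀ p ∈ s, g p ∈ u)
    (hc : ∀ q ∈ u, 0 ≤ c q) : ∑ p ∈ s, c (g p) ≤ ∑ q ∈ u, c q := by
  rw [← sum_image hg]
  exact sum_le_sum_of_subset_of_nonneg (image_subset_iff.2 hgu) fun q hq _ => hc q hq

theorem Finset.sum_comp_add_le_sum_of_injOn {b : κ} (hg : Set.InjOn g s)
    (hgu : ∀ p ∈ s, g p ∈ u) (hb : b ∈ u) (hgb : ∀ p ∈ s, g p ≠ b) (hc : ∀ q ∈ u, 0 ≤ c q) :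
    ∑ p ∈ s, c (g p) + c b ≤ ∑ q ∈ u, c q := by
  have hb' : b ∉ s.image g := by simpa [eq_comm] using hgb
  rw [← sum_image hg, add_comm, ← sum_insert hb']
  refine sum_le_sum_of_subset_of_nonneg ?_ fun q hq _ => hc q hq
  exact insert_subset hb (image_subset_iff.2 hgu)

end SumInjOn

namespace TWATSP

section Tour

variable {n : ℕ} {M : Type*} [AddCommMonoid M]
  (r : Equiv.Perm (Fin (n + 1))) (t : Fin (n + 1) → Fin (n + 1) → M) (s : Fin (n + 1) → M)

/-- Time from leaving the depot to leaving the `p`-th node of the tour `r`, so that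
`w (r p) = t₀ + tourTime r t s p`. -/
def tourTime (p : Fin (n + 1)) : M :=
  ∑ q ∈ Iio p, (t (r q) (r (q + 1)) + s (r (q + 1)))

variable {r t s}

theorem tourTime_add_one {p : Fin (n + 1)} (hp : p + 1 ≠ 0) :
    tourTime r t s (p + 1) = tourTime r t s p + (t (r p) (r (p + 1)) + s (r (p + 1))) := by
  have hlt : p < Fin.last n := by
    refine Fin.lt_last_iff_ne_last.2 fun h => hp ?_
    rw [h, Fin.last_add_one]
  have hIio : Iio (p + 1) = insert p (Iio p) := by
    rw [Iio_insert, Fin.Iio_add_one_eq_Iic (by simpa using Fin.val_lt_last hlt.ne)]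
  rw [tourTime, tourTime, hIio, sum_insert notMem_Iio_self, add_comm]

@[simp]
theorem tourTime_zero : tourTime r t s 0 = 0 := by
  rw [tourTime, Iio_eq_empty.2 fun q _ => Fin.zero_le q, sum_empty]

variable [PartialOrder M] [IsOrderedAddMonoid M]

theorem tourTime_nonneg (ht : ∀ i j, 0 ≤ t i j) (hs : ∀ j, 0 ≤ s j) (p : Fin (n + 1)) :
    0 ≤ tourTime r t s p :=
  sum_nonneg fun _ _ => add_nonneg (ht _ _) (hs _)

theorem tourTime_le_last (ht : ∀ i j, 0 ≤ t i j) (hs : ∀ j, 0 ≤ s j) (p : Fin (n + 1)) :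
    tourTime r t s p ≤ tourTime r t s (Fin.last n) :=
  sum_le_sum_of_subset_of_nonneg (Iio_subset_Iio (Fin.le_last p))
    fun _ _ _ => add_nonneg (ht _ _) (hs _)

theorem tourTime_last_add_le (hr0 : r 0 = 0) (ht : ∀ i j, 0 ≤ t i j) (hs : ∀ j, 0 ≤ s j)
    {i j : Fin (n + 1)} (hij : i ≠ j) (hj : j ≠ 0) (hnot : ¬∃ p, r p = i ∧ r (p + 1) = j) :
    tourTime r t s (Fin.last n) + t i j + s j ≤
      (∑ i, ∑ j ∈ univ.erase i, t i j) + 2 • ∑ j ∈ univ.erase 0, s j := by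
  have htravel : ∑ q ∈ Iio (Fin.last n), t (r q) (r (q + 1)) + t i j ≤
      ∑ i, ∑ j ∈ univ.erase i, t i j := by
    rw [← sum_sigma univ (fun i => univ.erase i) fun a => t a.1 a.2]
    refine sum_comp_add_le_sum_of_injOn (u := univ.sigma fun i => univ.erase i)
      (g := fun q => ⟨r q, r (q + 1)⟩) (c := fun a => t a.1 a.2) (b := ⟨i, j⟩)
      (fun p _ q _ h => r.injective (Sigma.mk.inj_iff.1 h).1) (fun q hq => ?_)
      (by simpa [mem_sigma] using hij.symm)
      (fun q _ h => hnot ⟨q, (Sigma.mk.inj_iff.1 h).1, eq_of_heq (Sigma.mk.inj_iff.1 h).2⟩)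
      fun _ _ => ht _ _
    simpa [eq_comm] using (Fin.lt_add_one_iff.2 (mem_Iio.1 hq)).ne
  have hservice : ∑ q ∈ Iio (Fin.last n), s (r (q + 1)) ≤ ∑ j ∈ univ.erase 0, s j := by
    refine sum_comp_le_sum_of_injOn (r.injective.comp (add_left_injective 1)).injOn
      (fun q hq => ?_) fun _ _ => hs _
    rw [mem_erase, ← hr0, Ne, r.injective.eq_iff]
    exact ⟨(Fin.add_one_pos q (mem_Iio.1 hq)).ne', mem_univ _⟩
  have hsj : s j ≤ ∑ j ∈ univ.erase 0, s j :=
    single_le_sum (fun k _ => hs k) (mem_erase.2 ⟨hj, mem_univ j⟩)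
  calc tourTime r t s (Fin.last n) + t i j + s j
      = (∑ q ∈ Iio (Fin.last n), t (r q) (r (q + 1)) + t i j) +
          (∑ q ∈ Iio (Fin.last n), s (r (q + 1)) + s j) := by
        rw [tourTime, sum_add_distrib]; abel
    _ ≤ _ := by rw [two_nsmul]; exact add_le_add htravel (add_le_add hservice hsj)

end Tour

theorem tourTime_arc_constraint {n : ℕ} {x : Fin (n + 1) → Fin (n + 1) → ℝ}
    (hx01 : ∀ i j, x i j = 0 ∨ x i j = 1) {r : Equiv.Perm (Fin (n + 1))} (hr0 : r 0 = 0)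
    (hroute : ∀ i j : Fin (n + 1), i ≠ j →
      (x i j = 1 ↔ ∃ p : Fin (n + 1), r p = i ∧ r (p + 1) = j))
    {s : Fin (n + 1) → ℝ} (hs : ∀ j, 0 ≤ s j) {t : Fin (n + 1) → Fin (n + 1) → ℝ}
    (ht : ∀ i j, 0 ≤ t i j) {M : ℝ}
    (hM : (∑ i, ∑ j ∈ univ.erase i, t i j) + 2 * ∑ j ∈ univ.erase 0, s j ≤ M)
    {i j : Fin (n + 1)} (hij : i ≠ j) (hj : j ≠ 0) :
    tourTime r t s (r.symm i) + t i j + s j - (1 - x i j) * M ≤ tourTime r t s (r.symm j) := by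
  rcases hx01 i j with hx | hx
  · have hnot : ¬∃ p, r p = i ∧ r (p + 1) = j := fun h => by
      simp [(hroute i j hij).2 h] at hx
    have hbound := tourTime_last_add_le hr0 ht hs hij hj hnot
    have hi : tourTime r t s (r.symm i) ≤ tourTime r t s (Fin.last n) := tourTime_le_last ht hs _
    have hj' : 0 ≤ tourTime r t s (r.symm j) := tourTime_nonneg ht hs _
    rw [two_nsmul] at hbound
    rw [hx]
    linarith
  · obtain ⟨p, rfl, rfl⟩ := (hroute i j hij).1 hx
    have hp : p + 1 ≠ 0 := fun h => hj (by rw [h, hr0])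
    rw [r.symm_apply_apply, r.symm_apply_apply, tourTime_add_one hp, hx]
    linarith

end TWATSP

theorem twatsp_relatively_complete_recourse_general
    (n : ℕ)
    (x : Fin (n + 1) → Fin (n + 1) → ℝ)
    (hx01 : ∀ i j, x i j = 0 ∨ x i j = 1)
    (r : Equiv.Perm (Fin (n + 1))) (hr0 : r 0 = 0)
    (hroute : ∀ i j : Fin (n + 1), i ≠ j →
      (x i j = 1 ↔ ∃ p : Fin (n + 1), r p = i ∧ r (p + 1) = j))
    (s : Fin (n + 1) → ℝ) (hs : ∀ j, 0 ≤ s j)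
    (ys ye : Fin (n + 1) → ℝ)
    (t : Fin (n + 1) → Fin (n + 1) → ℝ) (ht : ∀ i j, 0 ≤ t i j)
    (t₀ : ℝ) (ht₀ : 0 ≤ t₀) (T : ℝ) (M : ℝ)
    (hM : (∑ i, ∑ j ∈ Finset.univ.erase i, t i j) + 2 * ∑ j ∈ Finset.univ.erase 0, s j ≤ M) :
    ∃ (w : Fin (n + 1) → ℝ) (e l : Fin (n + 1) → ℝ) (o : ℝ),
      w 0 = t₀ ∧
      (∀ j, j ≠ 0 → 0 ≤ w j) ∧
      (∀ j, j ≠ 0 → 0 ≤ e j) ∧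
      (∀ j, j ≠ 0 → 0 ≤ l j) ∧
      0 ≤ o ∧
      (∀ i j, i ≠ j → j ≠ 0 → w i + t i j + s j - (1 - x i j) * M ≤ w j) ∧
      (∀ j, j ≠ 0 → ys j - w j - s j ≤ e j) ∧
      (∀ j, j ≠ 0 → w j - ye j ≤ l j) ∧
      (∀ j, j ≠ 0 → w j + t j 0 - T ≤ o) := by
  set w : Fin (n + 1) → ℝ := fun j => t₀ + TWATSP.tourTime r t s (r.symm j)
  have hw0 : w 0 = t₀ := by
    simp [w, (Equiv.symm_apply_eq r).2 hr0.symm]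
  refine ⟨w, fun j => max 0 (ys j - w j - s j), fun j => max 0 (w j - ye j),
    max 0 (univ.sup' univ_nonempty fun j => w j + t j 0 - T), hw0,
    fun j _ => add_nonneg ht₀ (TWATSP.tourTime_nonneg ht hs _),
    fun _ _ => le_max_left _ _, fun _ _ => le_max_left _ _, le_max_left _ _,
    fun i j hij hj => ?_, fun _ _ => le_max_right _ _, fun _ _ => le_max_right _ _,
    fun j _ => (le_sup' (fun j => w j + t j 0 - T) (mem_univ j)).trans (le_max_right _ _)⟩
  have := TWATSP.tourTime_arc_constraint hx01 hr0 hroute hs ht hM hij hj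
  simp only [w]
  linarith

/-- Relatively complete recourse of the TWATSP-ST: for any routing decision `x` whose
arcs with `x i j = 1` form a directed Hamiltonian cycle through the depot `0` (encoded by
a permutation `r` of `Fin (n+1)` enumerating the tour, with `r 0 = 0`), any time window
assignment `ys, ye ≥ 0`, any realized nonnegative travel times `t`, and any big-M constant
with `M ≥ Σ_{(i,j)∈A} t_{ij} + 2 Σ_{j∈V⁺} s_j`, the second-stage problem admits a feasible
solution `(w, e, l, o)`. -/
theorem twatsp_relatively_complete_recourse
    (n : ℕ)
    (x : Fin (n + 1) → Fin (n + 1) → ℝ)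
    (hx01 : ∀ i j, x i j = 0 ∨ x i j = 1)
    (r : Equiv.Perm (Fin (n + 1))) (hr0 : r 0 = 0)
    (hroute : ∀ i j : Fin (n + 1), i ≠ j →
      (x i j = 1 ↔ ∃ p : Fin (n + 1), r p = i ∧ r (p + 1) = j))
    (s : Fin (n + 1) → ℝ) (hs : ∀ j, 0 ≤ s j)
    (ys ye : Fin (n + 1) → ℝ) (hys : ∀ j, j ≠ 0 → 0 ≤ ys j) (hye : ∀ j, j ≠ 0 → 0 ≤ ye j)
    (t : Fin (n + 1) → Fin (n + 1) → ℝ) (ht : ∀ i j, 0 ≤ t i j)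
    (t₀ : ℝ) (ht₀ : 0 ≤ t₀) (T : ℝ) (M : ℝ)
    (hM : (∑ i, ∑ j ∈ Finset.univ.erase i, t i j) + 2 * ∑ j ∈ Finset.univ.erase 0, s j ≤ M) :
    ∃ (w : Fin (n + 1) → ℝ) (e l : Fin (n + 1) → ℝ) (o : ℝ),
      w 0 = t₀ ∧
      (∀ j, j ≠ 0 → 0 ≤ w j) ∧
      (∀ j, j ≠ 0 → 0 ≤ e j) ∧
      (∀ j, j ≠ 0 → 0 ≤ l j) ∧
      0 ≤ o ∧
      (∀ i j, i ≠ j → j ≠ 0 → w i + t i j + s j - (1 - x i j) * M ≤ w j) ∧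
      (∀ j, j ≠ 0 → ys j - w j - s j ≤ e j) ∧
      (∀ j, j ≠ 0 → w j - ye j ≤ l j) ∧
      (∀ j, j ≠ 0 → w j + t j 0 - T ≤ o) :=
  twatsp_relatively_complete_recourse_general n x hx01 r hr0 hroute s hs ys ye t ht t₀ ht₀ T M hM
end
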